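/- Let κ, τ, φ : ℝ² → ℝ be smooth (C^∞) functions of (t,x) with κ(t,x) > 0 for all (t,x), satisfying ∂_x φ = τ, ∂_t φ = -(∂_x²τ + 3κ^{-1}∂_x(τ ∂_x κ) + (3/2)τκ² - τ³), and the mKdV-flow curvature equation -∂_t κ = ∂_x³κ + (3/2)(κ² - 2τ²)∂_x κ - 3κτ ∂_x τ. Then the complex-valued function u(t,x) := κ(t,x) e^{iφ(t,x)} satisfies the complex modified Korteweg–de Vries equation -∂_t u = ∂_x³ u + (3/2)|u|² ∂_x u. -/

import Mathlib

/-!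
Write `u = A e^{iφ}`. Since `φ_x = τ`, differentiating in `x` acts on the amplitude as
`A ↦ A_x + iτA`, and differentiating in `t` as `A ↦ A_t + iφ_t A`. Starting from `A = κ`, this gives
`u_x`, `u_xxx` and `u_t` as explicit amplitudes times `e^{iφ}`, and `|u| = κ`. After cancelling
`e^{iφ}`, the real part of the complex mKdV equation is the curvature equation and its imaginary
part is `κ` times the equation for `φ_t`.
-/

noncomputable section

/-- Partial derivative with respect to the first variable `t`. -/
def pt {E : Type*} [NormedAddCommGroup E] [NormedSpace ℝ E]
    (f : ℝ × ℝ → E) : ℝ × ℝ → E := fun p => deriv (fun s => f (s, p.2)) p.1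

/-- Partial derivative with respect to the second variable `x`. -/
def px {E : Type*} [NormedAddCommGroup E] [NormedSpace ℝ E]
    (f : ℝ × ℝ → E) : ℝ × ℝ → E := fun p => deriv (fun s => f (p.1, s)) p.2

open Complex
open scoped ContDiff

section PartialDerivatives

variable {E : Type*} [NormedAddCommGroup E] [NormedSpace ℝ E] {f : ℝ × ℝ → E}

lemma Differentiable.hasDerivAt_px (hf : Differentiable ℝ f) (p : ℝ × ℝ) :
    HasDerivAt (fun s => f (p.1, s)) (px f p) p.2 :=
  (hf.comp ((differentiable_const p.1).prodMk differentiable_id)).differentiableAt.hasDerivAt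

lemma Differentiable.hasDerivAt_pt (hf : Differentiable ℝ f) (p : ℝ × ℝ) :
    HasDerivAt (fun s => f (s, p.2)) (pt f p) p.1 :=
  (hf.comp (differentiable_id.prodMk (differentiable_const p.2))).differentiableAt.hasDerivAt

lemma px_eq_fderiv_apply (hf : Differentiable ℝ f) : px f = fun p => fderiv ℝ f p (0, 1) := by
  funext p
  have hline : HasDerivAt (fun s : ℝ => (p.1, s)) ((0 : ℝ), (1 : ℝ)) p.2 :=
    (hasDerivAt_const _ _).prodMk (hasDerivAt_id _)
  simpa [px, Function.comp_def] using ((hf p).hasFDerivAt.comp_hasDerivAt p.2 hline).deriv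

lemma contDiff_px {m n : WithTop ℕ∞} (hf : ContDiff ℝ n f) (hmn : m + 1 ≤ n) :
    ContDiff ℝ m (px f) := by
  rw [px_eq_fderiv_apply (hf.differentiable (by rintro rfl; simp at hmn))]
  exact (hf.fderiv_right hmn).clm_apply contDiff_const

end PartialDerivatives

lemma px_mul {𝔸 : Type*} [NormedRing 𝔸] [NormedAlgebra ℝ 𝔸] {f g : ℝ × ℝ → 𝔸}
    (hf : Differentiable ℝ f) (hg : Differentiable ℝ g) (p : ℝ × ℝ) :
    px (fun q => f q * g q) p = px f p * g p + f p * px g p :=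
  ((hf.hasDerivAt_px p).mul (hg.hasDerivAt_px p)).deriv

lemma Differentiable.hasDerivAt_ofReal_px {f : ℝ × ℝ → ℝ} (hf : Differentiable ℝ f)
    (p : ℝ × ℝ) : HasDerivAt (fun s => (f (p.1, s) : ℂ)) ((px f p : ℝ) : ℂ) p.2 :=
  (hf.hasDerivAt_px p).ofReal_comp

lemma HasDerivAt.mul_cexp_I_mul {A : ℝ → ℂ} {A' : ℂ} {φ : ℝ → ℝ} {φ' s : ℝ}
    (hA : HasDerivAt A A' s) (hφ : HasDerivAt φ φ' s) :
    HasDerivAt (fun s => A s * cexp (I * φ s)) ((A' + I * φ' * A s) * cexp (I * φ s)) s :=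
  (hA.mul (hφ.ofReal_comp.const_mul I).cexp).congr_deriv (by ring)

section PhaseFactor

variable {A A' : ℝ × ℝ → ℂ} {φ : ℝ × ℝ → ℝ}

lemma px_mul_cexp_I_mul (hA : ∀ p, HasDerivAt (fun s => A (p.1, s)) (A' p) p.2)
    (hφ : Differentiable ℝ φ) :
    px (fun p => A p * cexp (I * φ p)) = fun p => (A' p + I * px φ p * A p) * cexp (I * φ p) :=
  funext fun p => ((hA p).mul_cexp_I_mul (hφ.hasDerivAt_px p)).deriv

lemma pt_mul_cexp_I_mul (hA : ∀ p, HasDerivAt (fun s => A (s, p.2)) (A' p) p.1)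
    (hφ : Differentiable ℝ φ) :
    pt (fun p => A p * cexp (I * φ p)) = fun p => (A' p + I * pt φ p * A p) * cexp (I * φ p) :=
  funext fun p => ((hA p).mul_cexp_I_mul (hφ.hasDerivAt_pt p)).deriv

end PhaseFactor

def hasimoto (κ φ : ℝ × ℝ → ℝ) : ℝ × ℝ → ℂ := fun p => κ p * cexp (I * φ p)

lemma norm_hasimoto {κ : ℝ × ℝ → ℝ} (φ : ℝ × ℝ → ℝ) {p : ℝ × ℝ} (hκ : 0 ≤ κ p) :
    ‖hasimoto κ φ p‖ = κ p := by
  rw [hasimoto, norm_mul, norm_real, Real.norm_of_nonneg hκ, norm_exp_I_mul_ofReal, mul_one]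

section Hasimoto

variable {κ τ φ : ℝ × ℝ → ℝ}

lemma px_hasimoto (hκ : ContDiff ℝ ∞ κ) (hφ : ContDiff ℝ ∞ φ) (hφx : ∀ p, px φ p = τ p) :
    px (hasimoto κ φ) = fun p => (↑(px κ p) + I * (κ p * τ p)) * cexp (I * φ p) := by
  unfold hasimoto
  rw [px_mul_cexp_I_mul (hκ.differentiable (by simp)).hasDerivAt_ofReal_px
    (hφ.differentiable (by simp))]
  funext p
  rw [hφx]
  ring

lemma px_px_hasimoto (hκ : ContDiff ℝ ∞ κ) (hτ : ContDiff ℝ ∞ τ) (hφ : ContDiff ℝ ∞ φ)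
    (hφx : ∀ p, px φ p = τ p) :
    px (px (hasimoto κ φ)) = fun p =>
      (↑(px (px κ) p) - κ p * τ p ^ 2 + I * (2 * ↑(px κ p) * τ p + κ p * ↑(px τ p)))
        * cexp (I * φ p) := by
  have hκ₁ : ContDiff ℝ ∞ (px κ) := contDiff_px hκ (by simp)
  have Dκ := (hκ.differentiable (by simp)).hasDerivAt_ofReal_px
  have Dκ₁ := (hκ₁.differentiable (by simp)).hasDerivAt_ofReal_px
  have Dτ := (hτ.differentiable (by simp)).hasDerivAt_ofReal_px
  rw [px_hasimoto hκ hφ hφx,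
    px_mul_cexp_I_mul (fun p => (Dκ₁ p).add (((Dκ p).mul (Dτ p)).const_mul I))
      (hφ.differentiable (by simp))]
  funext p
  rw [hφx]
  linear_combination (κ p * τ p ^ 2 * cexp (I * φ p)) * I_sq

lemma px_px_px_hasimoto (hκ : ContDiff ℝ ∞ κ) (hτ : ContDiff ℝ ∞ τ) (hφ : ContDiff ℝ ∞ φ)
    (hφx : ∀ p, px φ p = τ p) :
    px (px (px (hasimoto κ φ))) = fun p =>
      (↑(px (px (px κ)) p) - 3 * ↑(px κ p) * τ p ^ 2 - 3 * κ p * τ p * ↑(px τ p)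
        + I * (3 * ↑(px (px κ) p) * τ p + 3 * ↑(px κ p) * ↑(px τ p) + κ p * ↑(px (px τ) p)
          - κ p * τ p ^ 3))
        * cexp (I * φ p) := by
  have hκ₁ : ContDiff ℝ ∞ (px κ) := contDiff_px hκ (by simp)
  have hκ₂ : ContDiff ℝ ∞ (px (px κ)) := contDiff_px hκ₁ (by simp)
  have hτ₁ : ContDiff ℝ ∞ (px τ) := contDiff_px hτ (by simp)
  have Dκ := (hκ.differentiable (by simp)).hasDerivAt_ofReal_px
  have Dκ₁ := (hκ₁.differentiable (by simp)).hasDerivAt_ofReal_px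
  have Dκ₂ := (hκ₂.differentiable (by simp)).hasDerivAt_ofReal_px
  have Dτ := (hτ.differentiable (by simp)).hasDerivAt_ofReal_px
  have Dτ₁ := (hτ₁.differentiable (by simp)).hasDerivAt_ofReal_px
  rw [px_px_hasimoto hκ hτ hφ hφx,
    px_mul_cexp_I_mul (fun p => ((Dκ₂ p).sub ((Dκ p).mul ((Dτ p).fun_pow 2))).add
      (((((Dκ₁ p).const_mul 2).mul (Dτ p)).add ((Dκ p).mul (Dτ₁ p))).const_mul I))
      (hφ.differentiable (by simp))]
  funext p
  rw [hφx]
  linear_combination ((2 * ↑(px κ p) * τ p ^ 2 + κ p * τ p * ↑(px τ p)) * cexp (I * φ p)) * I_sq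

lemma pt_hasimoto (hκ : ContDiff ℝ ∞ κ) (hφ : ContDiff ℝ ∞ φ) :
    pt (hasimoto κ φ) = fun p => (↑(pt κ p) + I * κ p * pt φ p) * cexp (I * φ p) := by
  unfold hasimoto
  rw [pt_mul_cexp_I_mul (fun p => ((hκ.differentiable (by simp)).hasDerivAt_pt p).ofReal_comp)
    (hφ.differentiable (by simp))]
  funext p
  ring

end Hasimoto

/-- The Hasimoto transformation `u = κ e^{iφ}` maps solutions of the
mKdV-flow curvature/torsion equations to solutions of the complex
modified Korteweg–de Vries equation `-u_t = u_xxx + (3/2)|u|² u_x`. -/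
theorem hasimoto_transformation_mKdV
    (κ τ φ : ℝ × ℝ → ℝ)
    (hκ : ContDiff ℝ (⊤ : ℕ∞) κ) (hτ : ContDiff ℝ (⊤ : ℕ∞) τ)
    (hφ : ContDiff ℝ (⊤ : ℕ∞) φ)
    (hκpos : ∀ p, 0 < κ p)
    (hφx : ∀ p, px φ p = τ p)
    (hφt : ∀ p, pt φ p
      = -(px (px τ) p + 3 * (κ p)⁻¹ * px (fun q => τ q * px κ q) p
          + (3 / 2) * τ p * (κ p) ^ 2 - (τ p) ^ 3))
    (hκt : ∀ p, -pt κ p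
      = px (px (px κ)) p + (3 / 2) * ((κ p) ^ 2 - 2 * (τ p) ^ 2) * px κ p
        - 3 * κ p * τ p * px τ p)
    (u : ℝ × ℝ → ℂ)
    (hu : ∀ p, u p = (κ p : ℂ) * Complex.exp (Complex.I * (φ p : ℂ))) :
    ∀ p, -pt u p
      = px (px (px u)) p + (3 / 2) * (‖u p‖ : ℂ) ^ 2 * px u p := by
  obtain rfl : u = hasimoto κ φ := funext hu
  intro p
  have hκφt : κ p * pt φ p = -(κ p * px (px τ) p + 3 * (px τ p * px κ p + τ p * px (px κ) p)
      + 3 / 2 * τ p * κ p ^ 3 - κ p * τ p ^ 3) := by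
    rw [hφt, px_mul (hτ.differentiable (by simp))
      ((contDiff_px (m := ∞) hκ (by simp)).differentiable (by simp))]
    field_simp [(hκpos p).ne']
  rw [pt_hasimoto hκ hφ, px_px_px_hasimoto hκ hτ hφ hφx, px_hasimoto hκ hφ hφx,
    norm_hasimoto φ (hκpos p).le]
  beta_reduce
  have hκtC := congrArg ofReal (hκt p)
  have hκφtC := congrArg ofReal hκφt
  push_cast at hκtC hκφtC
  linear_combination cexp (I * φ p) * hκtC - I * cexp (I * φ p) * hκφtC
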